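/- arXiv:1312.5681 — 2 statements merged into one kernel-verified Lean document; each statement's English description precedes it below -/
import Mathlib

section
/- Let σ ∈ (0,1) and let f : ℝ^{n−1} → ℝ be locally Lipschitz, and let B = epi f = {(x,ξ) ∈ ℝ^{n−1} × ℝ : ξ ≥ f(x)} ⊆ ℝⁿ. Let x* ∈ ℝ^{n−1} and suppose there exist a neighborhood V of x* in ℝ^{n−1} and μ > 0 such that for every x₀ ∈ V and every proximal subgradient g ∈ ∂_p f(x₀), the one-sided Hölder estimate f(x₀) + ⟨g, x − x₀⟩ − μ‖x − x₀‖^{1+σ} ≤ f(x) holds for all x ∈ V. Then for every closed set A ⊆ ℝⁿ containing b* = (x*, f(x*)), and every constant c > 0 satisfying μ ≤ √c/(2+c)^σ, the set B is σ-Hölder regular with respect to A at b* with constant c. -/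
open Set Metric Filter Topology RealInnerProductSpace
open scoped ENNReal

variable {E : Type*} [NormedAddCommGroup E] [InnerProductSpace ℝ E]

/-- The (possibly set-valued) metric projection onto a set `S`. -/
noncomputable def projSet (S : Set E) (x : E) : Set E :=
  {s | s ∈ S ∧ ‖x - s‖ = Metric.infDist x S}

/-- The proximal normal cone to `S` at `s`. -/
def proxNormalCone (S : Set E) (s : E) : Set E :=
  {v | ∃ l : ℝ, 0 ≤ l ∧ ∃ u : E, v = l • u ∧ s ∈ projSet S (s + u)}

/-- `B` is `σ`-Hölder regular with respect to `A` at `bs` with constant `c`. -/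
def HolderRegular (A B : Set E) (bs : E) (σ c : ℝ) : Prop :=
  ∃ U ∈ nhds bs, ∀ a' ∈ A ∩ U, ∀ b' ∈ projSet B a' ∩ U, ∀ b ∈ B,
    ‖b - a'‖ ≤ (1 + c) * ‖a' - b'‖ → a' ∈ projSet A b →
    ⟪a' - b', b - b'⟫ ≤ Real.sqrt c * ‖a' - b'‖ ^ (σ + 1) * ‖b - b'‖

/-- The point of `ℝ^{m} × ℝ` (with the Euclidean product norm) built from `x` and `ξ`. -/
noncomputable def toE (m : ℕ) (x : EuclideanSpace ℝ (Fin m)) (ξ : ℝ) :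
    WithLp 2 (EuclideanSpace ℝ (Fin m) × ℝ) :=
  (WithLp.equiv 2 (EuclideanSpace ℝ (Fin m) × ℝ)).symm (x, ξ)

/-- The epigraph of `f`, as a subset of `ℝ^{m} × ℝ`. -/
def epi (m : ℕ) (f : EuclideanSpace ℝ (Fin m) → ℝ) :
    Set (WithLp 2 (EuclideanSpace ℝ (Fin m) × ℝ)) :=
  {p | f ((WithLp.equiv 2 (EuclideanSpace ℝ (Fin m) × ℝ)) p).1 ≤
        ((WithLp.equiv 2 (EuclideanSpace ℝ (Fin m) × ℝ)) p).2}

/-!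
The nearest point `b = (x₀, β)` of `epi f` to `a` lies on the graph, and unless `a = b` the point
`a` lies strictly below it: a horizontal proximal normal would contradict the local Lipschitz
bound. Hence `a - b = λ • (g, -1)` with `0 < λ ≤ ‖a - b‖`, so `g` is a proximal subgradient at
`x₀`, and for `q ∈ epi f` the Hölder estimate at `x₀` gives
`⟪a - b, q - b⟫ ≤ λ μ ‖q - b‖ ^ (1 + σ)`. For `q` as in the definition of Hölder regularity,
`‖q - b‖ ≤ (2 + c) ‖a - b‖`, and `μ (2 + c) ^ σ ≤ √c` finishes the estimate.
-/

theorem norm_sub_le_of_mem_projSet {F : Type*} [NormedAddCommGroup F] {S : Set F} {x s q : F}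
    (hs : s ∈ projSet S x) (hq : q ∈ S) : ‖x - s‖ ≤ ‖x - q‖ := by
  rw [hs.2, ← dist_eq_norm]
  exact infDist_le_dist_of_mem hq

theorem mul_mul_rpow_one_add_le {r D μ k C σ : ℝ} (hr : 0 ≤ r) (hD : 0 ≤ D) (hDr : D ≤ C * r)
    (hC : 0 < C) (hμ : 0 ≤ μ) (hσ : 0 ≤ σ) (hμk : μ ≤ k / C ^ σ) :
    r * μ * D ^ (1 + σ) ≤ k * r ^ (σ + 1) * D := by
  have hCσ : 0 < C ^ σ := Real.rpow_pos_of_pos hC σ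
  have hμC : μ * C ^ σ ≤ k := (le_div_iff₀ hCσ).1 hμk
  calc r * μ * D ^ (1 + σ) = μ * D ^ σ * (r * D) := by
        rw [Real.rpow_add' hD (by linarith), Real.rpow_one]; ring
    _ ≤ μ * (C * r) ^ σ * (r * D) := by gcongr
    _ = μ * C ^ σ * (r ^ (σ + 1) * D) := by
        rw [Real.mul_rpow hC.le hr, Real.rpow_add' hr (by linarith), Real.rpow_one]; ring
    _ ≤ k * r ^ (σ + 1) * D := by rw [mul_assoc k]; gcongr

section Epigraph

variable {m : ℕ} {f : EuclideanSpace ℝ (Fin m) → ℝ}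
  {a b : WithLp 2 (EuclideanSpace ℝ (Fin m) × ℝ)}

theorem sq_norm_add_sq_le_of_mem_projSet_epi (hb : b ∈ projSet (epi m f) a)
    {x : EuclideanSpace ℝ (Fin m)} {ξ : ℝ} (hξ : f x ≤ ξ) :
    ‖a.fst - b.fst‖ ^ 2 + (a.snd - b.snd) ^ 2 ≤ ‖a.fst - x‖ ^ 2 + (a.snd - ξ) ^ 2 := by
  have h := pow_le_pow_left₀ (norm_nonneg _) (norm_sub_le_of_mem_projSet hb (q := toE m x ξ) hξ) 2
  simpa [WithLp.prod_norm_sq_eq_of_L2, toE] using h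

theorem snd_le_of_mem_projSet_epi (hb : b ∈ projSet (epi m f) a) : a.snd ≤ b.snd := by
  by_contra! h
  have := sq_norm_add_sq_le_of_mem_projSet_epi hb (x := b.fst) (hb.1.trans h.le)
  nlinarith

/- If `a.snd = b.snd`, the points `(b.fst + s • v, b.snd + K s ‖v‖)` with `v = a.fst - b.fst`
lie in `epi f` by the Lipschitz bound, and are closer to `a` than `b` for small `s > 0`
because `(1 - s)² + K² s² < 1` once `s (1 + K²) < 2`. -/
theorem snd_lt_of_mem_projSet_epi (hf : LocallyLipschitz f) (hb : b ∈ projSet (epi m f) a)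
    (hab : a ≠ b) : a.snd < b.snd := by
  refine (snd_le_of_mem_projSet_epi hb).lt_of_ne fun heq => ?_
  set v := a.fst - b.fst with hv
  have hv0 : 0 < ‖v‖ := by
    refine norm_pos_iff.2 (sub_ne_zero.2 fun hfst => hab ?_)
    exact WithLp.ofLp_injective 2 (Prod.ext hfst heq)
  obtain ⟨K, t, ht, hK⟩ := hf b.fst
  have hnear : ∀ᶠ s in 𝓝 (0 : ℝ), b.fst + s • v ∈ t ∧ s < 2 / (1 + (K : ℝ) ^ 2) := by
    refine Eventually.and ?_ (eventually_lt_nhds (by positivity))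
    have hc : Continuous fun s : ℝ => b.fst + s • v := by fun_prop
    exact (by simpa using hc.tendsto 0 : Tendsto _ (𝓝 (0 : ℝ)) (𝓝 b.fst)) ht
  have hpos : ∀ᶠ s in 𝓝[>] (0 : ℝ), 0 < s := self_mem_nhdsWithin
  obtain ⟨s, ⟨hst, hsK⟩, hs⟩ := ((hnear.filter_mono nhdsWithin_le_nhds).and hpos).exists
  rw [lt_div_iff₀ (by positivity)] at hsK
  have hfs : f (b.fst + s • v) ≤ b.snd + K * (s * ‖v‖) := by
    have := hK.dist_le_mul _ hst _ (mem_of_mem_nhds ht)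
    rw [dist_eq_norm, dist_eq_norm, add_sub_cancel_left, norm_smul, Real.norm_of_nonneg hs.le,
      Real.norm_eq_abs] at this
    have hb₁ : f b.fst ≤ b.snd := hb.1
    linarith [le_abs_self (f (b.fst + s • v) - f b.fst)]
  have h := sq_norm_add_sq_le_of_mem_projSet_epi hb hfs
  rw [show a.fst - (b.fst + s • v) = (1 - s) • v by rw [hv]; module, norm_smul, heq,
    Real.norm_eq_abs, mul_pow, sq_abs, ← hv] at h
  nlinarith [mul_pos hs (pow_pos hv0 2)]

theorem snd_eq_of_mem_projSet_epi (hb : b ∈ projSet (epi m f) a) (hab : a.snd < b.snd) :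
    b.snd = f b.fst := by
  by_contra! hne
  have hf : f b.fst < b.snd := lt_of_le_of_ne hb.1 hne.symm
  have := sq_norm_add_sq_le_of_mem_projSet_epi hb (le_max_right a.snd (f b.fst))
  nlinarith [le_max_left a.snd (f b.fst), max_lt hab hf]

theorem toE_mem_proxNormalCone_epi (hb : b ∈ projSet (epi m f) a) (hab : a.snd < b.snd) :
    toE m ((b.snd - a.snd)⁻¹ • (a.fst - b.fst)) (-1) ∈
      proxNormalCone (epi m f) (toE m b.fst (f b.fst)) := by
  have hl : 0 < b.snd - a.snd := sub_pos.2 hab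
  have hbE : toE m b.fst (f b.fst) = b := by rw [← snd_eq_of_mem_projSet_epi hb hab]; rfl
  rw [hbE]
  refine ⟨(b.snd - a.snd)⁻¹, inv_nonneg.2 hl.le, a - b, ?_, by rwa [add_sub_cancel]⟩
  refine WithLp.ofLp_injective 2 (Prod.ext rfl ?_)
  change -1 = (b.snd - a.snd)⁻¹ * (a.snd - b.snd)
  field_simp
  ring

theorem inner_sub_eq_of_snd_eq {q : WithLp 2 (EuclideanSpace ℝ (Fin m) × ℝ)} (hab : a.snd < b.snd)
    (hb : b.snd = f b.fst) :
    ⟪a - b, q - b⟫ = (b.snd - a.snd) *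
      (⟪(b.snd - a.snd)⁻¹ • (a.fst - b.fst), q.fst - b.fst⟫ - (q.snd - f b.fst)) := by
  have hl : b.snd - a.snd ≠ 0 := (sub_pos.2 hab).ne'
  rw [real_inner_smul_left, WithLp.prod_inner_apply, ← hb]
  simp only [WithLp.ofLp_fst, WithLp.ofLp_snd, WithLp.sub_fst, WithLp.sub_snd, Real.inner_apply]
  field_simp
  ring

theorem inner_sub_le_of_mem_projSet_epi (hf : LocallyLipschitz f) (hb : b ∈ projSet (epi m f) a)
    {q : WithLp 2 (EuclideanSpace ℝ (Fin m) × ℝ)} (hq : q ∈ epi m f) {μ p : ℝ} (hμ : 0 ≤ μ)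
    (hp : 0 ≤ p)
    (hest : ∀ g, toE m g (-1) ∈ proxNormalCone (epi m f) (toE m b.fst (f b.fst)) →
      f b.fst + ⟪g, q.fst - b.fst⟫ - μ * ‖q.fst - b.fst‖ ^ p ≤ f q.fst) :
    ⟪a - b, q - b⟫ ≤ ‖a - b‖ * μ * ‖q - b‖ ^ p := by
  rcases eq_or_ne a b with rfl | hab
  · simp
  have hlt := snd_lt_of_mem_projSet_epi hf hb hab
  have hgap : b.snd - a.snd ≤ ‖a - b‖ := by
    have h := WithLp.norm_snd_le _ (a - b)
    rw [WithLp.sub_snd, Real.norm_eq_abs, abs_sub_comm, abs_of_pos (sub_pos.2 hlt)] at h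
    exact h
  have hsubgrad := hest _ (toE_mem_proxNormalCone_epi hb hlt)
  have hq' : f q.fst ≤ q.snd := hq
  have hbound : ⟪(b.snd - a.snd)⁻¹ • (a.fst - b.fst), q.fst - b.fst⟫ - (q.snd - f b.fst) ≤
      μ * ‖q - b‖ ^ p := by
    calc _ ≤ μ * ‖q.fst - b.fst‖ ^ p := by linarith
      _ ≤ μ * ‖q - b‖ ^ p := by
        gcongr
        exact WithLp.norm_fst_le _ (q - b)
  rw [inner_sub_eq_of_snd_eq hlt (snd_eq_of_mem_projSet_epi hb hlt), mul_assoc]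
  calc _ ≤ (b.snd - a.snd) * (μ * ‖q - b‖ ^ p) :=
        mul_le_mul_of_nonneg_left hbound (sub_pos.2 hlt).le
    _ ≤ ‖a - b‖ * (μ * ‖q - b‖ ^ p) := by gcongr

end Epigraph

theorem stmt9 {m : ℕ} (σ : ℝ) (hσ : σ ∈ Set.Ioo (0:ℝ) 1)
    (f : EuclideanSpace ℝ (Fin m) → ℝ) (hf : LocallyLipschitz f)
    (xs : EuclideanSpace ℝ (Fin m)) (V : Set (EuclideanSpace ℝ (Fin m))) (hV : V ∈ nhds xs)
    (μ : ℝ) (hμ : 0 < μ)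
    (hest : ∀ x₀ ∈ V, ∀ g : EuclideanSpace ℝ (Fin m),
      toE m g (-1) ∈ proxNormalCone (epi m f) (toE m x₀ (f x₀)) →
      ∀ x ∈ V, f x₀ + ⟪g, x - x₀⟫ - μ * ‖x - x₀‖ ^ ((1:ℝ) + σ) ≤ f x) :
    ∀ A : Set (WithLp 2 (EuclideanSpace ℝ (Fin m) × ℝ)), IsClosed A →
      toE m xs (f xs) ∈ A → ∀ c : ℝ, 0 < c → μ ≤ Real.sqrt c / (2 + c) ^ σ →
      HolderRegular A (epi m f) (toE m xs (f xs)) σ c := by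
  intro A _ _ c hc hμc
  obtain ⟨δ, hδ, hδV⟩ := Metric.mem_nhds_iff.1 hV
  set bs := toE m xs (f xs)
  set ε := δ / (3 + 2 * c)
  have hε : 0 < ε := by positivity
  have hδε : (3 + 2 * c) * ε = δ := mul_div_cancel₀ δ (by positivity)
  have hfst : ∀ p, dist p bs < δ → p.fst ∈ V := fun p hp =>
    hδV (lt_of_le_of_lt (WithLp.dist_fst_le p bs) hp)
  refine ⟨ball bs ε, ball_mem_nhds bs hε, ?_⟩
  rintro a ⟨-, ha⟩ b ⟨hb, hbε⟩ q hq hqa -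
  rw [mem_ball] at ha hbε
  have hab : ‖a - b‖ < 2 * ε := by rw [← dist_eq_norm]; linarith [dist_triangle_right a b bs]
  have hqV : q.fst ∈ V := by
    refine hfst q ?_
    have := dist_triangle q a bs
    rw [dist_eq_norm q a] at this
    nlinarith
  have hqb : ‖q - b‖ ≤ (2 + c) * ‖a - b‖ := by linarith [norm_sub_le_norm_sub_add_norm_sub q a b]
  calc ⟪a - b, q - b⟫ ≤ ‖a - b‖ * μ * ‖q - b‖ ^ (1 + σ) :=
        inner_sub_le_of_mem_projSet_epi hf hb hq hμ.le (by linarith [hσ.1])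
          fun g hg => hest _ (hfst b (by nlinarith)) g hg _ hqV
    _ ≤ √c * ‖a - b‖ ^ (σ + 1) * ‖q - b‖ :=
        mul_mul_rpow_one_add_le (norm_nonneg _) (norm_nonneg _) hqb (by linarith) hμ.le hσ.1.le hμc
end

section
/- (Local convergence of alternating projections.) Let A and B be nonempty closed subsets of ℝⁿ and x* ∈ A ∩ B. Suppose B intersects A separably at x* with exponent ω ∈ [0,2) and constant γ > 0, and B is ω/2-Hölder regular with respect to A at x* with constant c < γ/2. Then there exists a neighborhood V of x* such that every sequence of alternating projections between A and B that has at least one iterate in V converges to a single point b* ∈ A ∩ B. -/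
open Set Metric Filter Topology RealInnerProductSpace
open scoped ENNReal

variable {E : Type*} [NormedAddCommGroup E] [InnerProductSpace ℝ E]

/-- `B` intersects `A` separably at `x` with exponent `ω` and constant `γ`. -/
def SeparablyIntersects (A B : Set E) (x : E) (ω γ : ℝ) : Prop :=
  ∃ U ∈ nhds x, ∀ b a' b' : E, b ∈ B → a' ∈ projSet A b → b' ∈ projSet B a' →
    b ∈ U → a' ∈ U → b' ∈ U →
    ⟪b - a', b' - a'⟫ ≤ (1 - γ * ‖b' - a'‖ ^ ω) * ‖b - a'‖ * ‖b' - a'‖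

/-!
Along the iterates write `d = d_A(b_k)`, `r = d_B(a_{k+1})` and `s = ‖b_{k+1} - b_k‖`.
Separability gives `s² ≥ (d - r)² + 2γ r^(ω+1) d`, and Hölder regularity (available when
`d ≤ (1 + c) r`) gives `s² ≤ 2√c r^(ω/2+1) s + d² - r²`. Since `2c < γ` these force a gap
`d - r ≳ r^(ω+1)`, which yields the one-step estimate `s ≤ K (d^θ - r^θ)` with `θ = 1 - ω/2`.
So `K d_A(b_k)^θ` bounds the length of the remaining path: iterates starting near `x*` never
leave the region where the estimates hold, `(b_k)` has finite length and converges, and the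
separability bound forces the limit to lie in `A`.
-/

lemma one_sub_mul_sub_le_rpow_mul_rpow_sub_rpow {σ d r : ℝ} (hσ0 : 0 ≤ σ) (hσ1 : σ ≤ 1)
    (hd : 0 ≤ d) (hr : 0 ≤ r) :
    (1 - σ) * (d - r) ≤ d ^ σ * (d ^ (1 - σ) - r ^ (1 - σ)) := by
  have hamgm := Real.geom_mean_le_arith_mean2_weighted hσ0 (sub_nonneg.2 hσ1) hd hr
    (add_sub_cancel σ 1)
  have hd' : d ^ σ * d ^ (1 - σ) = d := by
    rw [← Real.rpow_add' hd (by norm_num), add_sub_cancel, Real.rpow_one]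
  linarith

lemma exists_mul_le_mul_sub_of_sep_of_reg {γ c : ℝ} (hc : 0 ≤ c) (hcγ : 2 * c < γ) :
    ∃ M, ∀ d r s t : ℝ, 0 < r → r ≤ d → d ≤ (1 + c) * r → 0 ≤ t →
      (d - r) ^ 2 + 2 * (γ * t ^ 2) * d * r ≤ s ^ 2 →
      s ^ 2 ≤ 2 * (√c * (t * r)) * s + (d ^ 2 - r ^ 2) →
      s * t ≤ M * (d - r) := by
  set L := (2 + c) / (γ - 2 * c)
  refine ⟨√(4 * c * L ^ 2 + 2 * (2 + c) * L), fun d r s t hr hrd hdr ht hsep hreg => ?_⟩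
  have hs2 : s ^ 2 ≤ 4 * c * (t ^ 2 * r) * r + 2 * ((d - r) * (d + r)) := by
    have hp : (√c * (t * r)) ^ 2 = c * (t ^ 2 * r) * r := by
      rw [mul_pow, Real.sq_sqrt hc]; ring
    nlinarith [sq_nonneg (s - 2 * (√c * (t * r)))]
  have hdr' : (d - r) * (d + r) ≤ (2 + c) * (d - r) * r := by nlinarith
  -- separability bounds `s²` from below and regularity from above; `2c < γ` leaves room
  -- between the two bounds only through a gap `d - r` of order `t² r`
  have hgap : t ^ 2 * r ≤ L * (d - r) := by
    have h : (γ - 2 * c) * (t ^ 2 * r) * r ≤ (2 + c) * (d - r) * r := by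
      have hγ : 0 ≤ γ := by linarith
      nlinarith [mul_le_mul_of_nonneg_left hrd (by positivity : 0 ≤ 2 * γ * t ^ 2 * r)]
    rw [div_mul_eq_mul_div, le_div_iff₀ (by linarith), mul_comm]
    exact le_of_mul_le_mul_right h hr
  have hsq : (s * t) ^ 2 ≤ (√(4 * c * L ^ 2 + 2 * (2 + c) * L) * (d - r)) ^ 2 := by
    rw [mul_pow, mul_pow, Real.sq_sqrt (by positivity)]
    calc s ^ 2 * t ^ 2 ≤ 4 * c * (t ^ 2 * r) ^ 2 + 2 * (2 + c) * (t ^ 2 * r) * (d - r) := by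
          nlinarith [mul_le_mul_of_nonneg_right hs2 (sq_nonneg t)]
      _ ≤ 4 * c * (L * (d - r)) ^ 2 + 2 * (2 + c) * (L * (d - r)) * (d - r) := by gcongr
      _ = _ := by ring
  exact (abs_le_of_sq_le_sq' hsq (by positivity)).2

lemma exists_mul_rpow_le_mul_sub {ω γ c : ℝ} (hω0 : 0 ≤ ω) (hω2 : ω ≤ 2) (hc : 0 < c)
    (hcγ : 2 * c < γ) :
    ∃ N, ∀ d r s : ℝ, 0 ≤ r → r ≤ d → d ≤ 1 → 0 ≤ s → s ≤ d + r →
      (d - r) ^ 2 + 2 * (γ * r ^ ω) * d * r ≤ s ^ 2 →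
      (d ≤ (1 + c) * r → s ^ 2 ≤ 2 * (√c * r ^ (ω / 2 + 1)) * s + (d ^ 2 - r ^ 2)) →
      s * d ^ (ω / 2) ≤ N * (d - r) := by
  obtain ⟨M, hM⟩ := exists_mul_le_mul_sub_of_sep_of_reg hc.le hcγ
  refine ⟨max (2 * (1 + c) / c) ((1 + c) * M), fun d r s hr hrd hd1 hs hsd hsep hreg => ?_⟩
  have hdr : 0 ≤ d - r := sub_nonneg.2 hrd
  rcases lt_or_ge ((1 + c) * r) d with hfar | hnear
  · have hdσ : d ^ (ω / 2) ≤ 1 := Real.rpow_le_one (hr.trans hrd) hd1 (by positivity)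
    calc s * d ^ (ω / 2) ≤ 2 * d := by nlinarith
      _ ≤ 2 * (1 + c) / c * (d - r) := by
        rw [div_mul_eq_mul_div, le_div_iff₀ hc]; nlinarith
      _ ≤ _ := mul_le_mul_of_nonneg_right (le_max_left _ _) hdr
  rcases hr.eq_or_lt with rfl | hr
  · obtain rfl : d = 0 := by linarith
    obtain rfl : s = 0 := by linarith
    simp
  set t := r ^ (ω / 2)
  have hrω : r ^ ω = t ^ 2 := by rw [← Real.rpow_mul_natCast hr.le]; norm_num
  have hrω1 : r ^ (ω / 2 + 1) = t * r := Real.rpow_add_one hr.ne' _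
  have hst := hM d r s t hr hrd hnear (by positivity) (by rwa [← hrω])
    (by rw [← hrω1]; exact hreg hnear)
  have hdσ : d ^ (ω / 2) ≤ (1 + c) * t := calc
    d ^ (ω / 2) ≤ ((1 + c) * r) ^ (ω / 2) :=
      Real.rpow_le_rpow (by linarith) hnear (by positivity)
    _ = (1 + c) ^ (ω / 2) * t := Real.mul_rpow (by linarith) hr.le
    _ ≤ (1 + c) ^ (1 : ℝ) * t := by
      gcongr
      · linarith
      · linarith
    _ = (1 + c) * t := by rw [Real.rpow_one]
  calc s * d ^ (ω / 2) ≤ (1 + c) * (s * t) := by nlinarith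
    _ ≤ (1 + c) * (M * (d - r)) := by gcongr
    _ = (1 + c) * M * (d - r) := by ring
    _ ≤ _ := mul_le_mul_of_nonneg_right (le_max_right _ _) hdr

theorem exists_le_mul_rpow_sub_rpow {ω γ c : ℝ} (hω0 : 0 ≤ ω) (hω2 : ω < 2) (hc : 0 < c)
    (hcγ : 2 * c < γ) :
    ∃ K > 0, ∀ d r s : ℝ, 0 ≤ r → r ≤ d → d ≤ 1 → 0 ≤ s → s ≤ d + r →
      (d - r) ^ 2 + 2 * (γ * r ^ ω) * d * r ≤ s ^ 2 →
      (d ≤ (1 + c) * r → s ^ 2 ≤ 2 * (√c * r ^ (ω / 2 + 1)) * s + (d ^ 2 - r ^ 2)) →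
      s ≤ K * (d ^ (1 - ω / 2) - r ^ (1 - ω / 2)) := by
  obtain ⟨N, hN⟩ := exists_mul_rpow_le_mul_sub hω0 hω2.le hc hcγ
  have hθ : 0 < 1 - ω / 2 := by linarith
  refine ⟨max N 1 / (1 - ω / 2), by positivity, fun d r s hr hrd hd1 hs hsd hsep hreg => ?_⟩
  rcases (hr.trans hrd).eq_or_lt with rfl | hd
  · obtain rfl : r = 0 := le_antisymm hrd hr
    obtain rfl : s = 0 := by linarith
    simp
  have hamgm := one_sub_mul_sub_le_rpow_mul_rpow_sub_rpow (σ := ω / 2) (by positivity)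
    (by linarith) hd.le hr
  have hkey : s * d ^ (ω / 2) ≤
      max N 1 / (1 - ω / 2) * (d ^ (1 - ω / 2) - r ^ (1 - ω / 2)) * d ^ (ω / 2) := calc
    s * d ^ (ω / 2) ≤ max N 1 * (d - r) := (hN d r s hr hrd hd1 hs hsd hsep hreg).trans
      (mul_le_mul_of_nonneg_right (le_max_left _ _) (sub_nonneg.2 hrd))
    _ ≤ max N 1 / (1 - ω / 2) * (d ^ (ω / 2) * (d ^ (1 - ω / 2) - r ^ (1 - ω / 2))) := by
      rw [div_mul_eq_mul_div, le_div_iff₀ hθ, mul_assoc]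
      exact mul_le_mul_of_nonneg_left (by linarith) (by positivity)
    _ = _ := by ring
  exact le_of_mul_le_mul_right hkey (Real.rpow_pos_of_pos hd _)

lemma rpow_add_two_le_rpow_mul_mul {ω D r d : ℝ} (hω : 0 ≤ ω) (hD : 0 ≤ D) (hDr : D ≤ r)
    (hrd : r ≤ d) : D ^ (ω + 2) ≤ r ^ ω * d * r := by
  rw [Real.rpow_add' hD (by linarith), Real.rpow_two, mul_assoc]
  exact mul_le_mul (Real.rpow_le_rpow hD hDr hω) (by nlinarith) (by positivity)
    (Real.rpow_nonneg (hD.trans hDr) ω)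

section Lyapunov

variable {X : Type*} [PseudoMetricSpace X] {x : ℕ → X} {φ : ℕ → ℝ}

lemma cauchySeq_of_dist_le_sub (hφ : ∀ k, 0 ≤ φ k)
    (h : ∀ k, dist (x k) (x (k + 1)) ≤ φ k - φ (k + 1)) : CauchySeq x :=
  cauchySeq_of_dist_le_of_summable _ h <|
    summable_of_sum_range_le (fun k => dist_nonneg.trans (h k)) fun n => by
      rw [Finset.sum_range_sub']
      linarith [hφ n]

lemma dist_lt_of_dist_le_sub {z : X} {ε : ℝ} (hφ : ∀ k, 0 ≤ φ k)
    (h : ∀ k, dist (x k) z < ε → dist (x k) (x (k + 1)) ≤ φ k - φ (k + 1))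
    (h0 : dist (x 0) z + φ 0 < ε) (k : ℕ) : dist (x k) z < ε := by
  suffices hk : dist (x k) (x 0) ≤ φ 0 - φ k by linarith [dist_triangle (x k) (x 0) z, hφ k]
  induction k with
  | zero => simp
  | succ k ih =>
    have hk : dist (x k) z < ε := by linarith [dist_triangle (x k) (x 0) z, hφ k]
    linarith [dist_triangle (x (k + 1)) (x k) (x 0), dist_comm (x (k + 1)) (x k), h k hk]

end Lyapunov

lemma exists_pos_add_mul_rpow_lt {K θ ε : ℝ} (hθ : 0 < θ) (hε : 0 < ε) :
    ∃ η > 0, η + K * η ^ θ < ε := by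
  have hcont : Tendsto (fun η : ℝ => η + K * η ^ θ) (𝓝[>] 0) (𝓝 0) := by
    have : Continuous fun η : ℝ => η + K * η ^ θ :=
      continuous_id.add (continuous_const.mul (Real.continuous_rpow_const hθ.le))
    simpa [Real.zero_rpow hθ.ne'] using (this.tendsto 0).mono_left nhdsWithin_le_nhds
  exact ((hcont.eventually (gt_mem_nhds hε)).and self_mem_nhdsWithin).exists.imp
    fun η h => ⟨h.2, h.1⟩

section NormedGroup

variable {F : Type*} [NormedAddCommGroup F]

lemma norm_sub_le_of_mem_projSet_s14 {S : Set F} {x y z : F} (hy : y ∈ projSet S x)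
    (hz : z ∈ S) : ‖x - y‖ ≤ ‖x - z‖ := by
  rw [hy.2, ← dist_eq_norm]
  exact infDist_le_dist_of_mem hz

lemma dist_le_two_mul_of_mem_projSet {S : Set F} {x y z : F} (hy : y ∈ projSet S x)
    (hz : z ∈ S) : dist y z ≤ 2 * dist x z := by
  have h := norm_sub_le_of_mem_projSet_s14 hy hz
  rw [← dist_eq_norm, ← dist_eq_norm, dist_comm] at h
  linarith [dist_triangle y x z]

lemma exists_forall_block_mem {A B : Set F} {xs : F} (hxs : xs ∈ A ∩ B) {U : Set F}
    (hU : U ∈ 𝓝 xs) :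
    ∃ ε ∈ Ioc 0 1, ∀ b a' b', a' ∈ projSet A b → b' ∈ projSet B a' → dist b xs < ε →
      b ∈ U ∧ a' ∈ U ∧ b' ∈ U := by
  obtain ⟨ε₀, hε₀, hball⟩ := Metric.mem_nhds_iff.1 hU
  refine ⟨min 1 (ε₀ / 4), ⟨by positivity, min_le_left _ _⟩, fun b a' b' ha' hb' hbx => ?_⟩
  have hbx4 : dist b xs < ε₀ / 4 := hbx.trans_le (min_le_right _ _)
  have ha'x := dist_le_two_mul_of_mem_projSet ha' hxs.1
  have hb'x := dist_le_two_mul_of_mem_projSet hb' hxs.2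
  refine ⟨hball ?_, hball ?_, hball ?_⟩ <;> rw [mem_ball] <;>
    linarith [dist_nonneg (x := b) (y := xs)]

structure IsAlternatingProjections (A B : Set F) (a b : ℕ → F) : Prop where
  mem_projSet_B : ∀ k, b k ∈ projSet B (a k)
  mem_projSet_A : ∀ k, a (k + 1) ∈ projSet A (b k)

namespace IsAlternatingProjections

variable {A B : Set F} {a b : ℕ → F}

lemma shift (h : IsAlternatingProjections A B a b) (m : ℕ) :
    IsAlternatingProjections A B (fun k => a (k + m)) (fun k => b (k + m)) where
  mem_projSet_B k := h.mem_projSet_B (k + m)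
  mem_projSet_A k := by simpa only [add_right_comm] using h.mem_projSet_A (k + m)

theorem mem_inter_and_tendsto (h : IsAlternatingProjections A B a b) (hA : IsClosed A)
    (hAne : A.Nonempty) (hB : IsClosed B) {p : F} (hb : Tendsto b atTop (𝓝 p)) {C q : ℝ}
    (hC : 0 < C) (hq : 0 < q)
    (hlow : ∀ k, C * infDist (b (k + 1)) A ^ q ≤ dist (b k) (b (k + 1)) ^ 2) :
    p ∈ A ∩ B ∧ Tendsto a atTop (𝓝 p) := by
  have hb1 : Tendsto (fun k => b (k + 1)) atTop (𝓝 p) := (tendsto_add_atTop_iff_nat 1).2 hb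
  have hpB : p ∈ B := hB.mem_of_tendsto hb (.of_forall fun k => (h.mem_projSet_B k).1)
  have hDp : infDist p A = 0 := by
    have hlhs : Tendsto (fun k => C * infDist (b (k + 1)) A ^ q) atTop
        (𝓝 (C * infDist p A ^ q)) :=
      ((((continuous_infDist_pt A).tendsto p).comp hb1).rpow_const (.inr hq.le)).const_mul C
    have hrhs : Tendsto (fun k => dist (b k) (b (k + 1)) ^ 2) atTop (𝓝 0) := by
      simpa using (hb.dist hb1).pow 2
    have hle := le_of_tendsto_of_tendsto' hlhs hrhs hlow
    have hpos : 0 ≤ infDist p A ^ q := Real.rpow_nonneg infDist_nonneg q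
    exact (Real.rpow_eq_zero infDist_nonneg hq.ne').1 (by nlinarith)
  refine ⟨⟨(hA.mem_iff_infDist_zero hAne).2 hDp, hpB⟩, (tendsto_add_atTop_iff_nat 1).1 ?_⟩
  have hbound : Tendsto (fun k => infDist (b k) A + dist (b k) p) atTop (𝓝 0) := by
    simpa [hDp] using ((continuous_infDist_pt A).tendsto p |>.comp hb).add
      (tendsto_iff_dist_tendsto_zero.1 hb)
  refine tendsto_iff_dist_tendsto_zero.2 <|
    squeeze_zero (fun _ => dist_nonneg) (fun k => ?_) hbound
  rw [← (h.mem_projSet_A k).2, ← dist_eq_norm, dist_comm (b k)]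
  exact dist_triangle _ _ _

end IsAlternatingProjections

end NormedGroup

lemma sq_sub_add_le_norm_sub_sq_of_inner_le {u v : E} {κ : ℝ}
    (h : ⟪u, v⟫ ≤ (1 - κ) * ‖u‖ * ‖v‖) :
    (‖u‖ - ‖v‖) ^ 2 + 2 * κ * ‖u‖ * ‖v‖ ≤ ‖u - v‖ ^ 2 := by
  rw [norm_sub_sq_real]
  linarith

lemma norm_sq_le_of_inner_le {v w : E} {κ : ℝ} (h : ⟪v, w⟫ ≤ κ * ‖w‖) :
    ‖w‖ ^ 2 ≤ 2 * κ * ‖w‖ + (‖w - v‖ ^ 2 - ‖v‖ ^ 2) := by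
  rw [norm_sub_sq_real, real_inner_comm]
  linarith

theorem exists_local_step_estimate {A B : Set E} {xs : E} (hxs : xs ∈ A ∩ B) {ω γ c : ℝ}
    (hω0 : 0 ≤ ω) (hω2 : ω < 2) (hc : 0 < c) (hcγ : 2 * c < γ)
    (hsep : SeparablyIntersects A B xs ω γ) (hreg : HolderRegular A B xs (ω / 2) c) :
    ∃ ε > 0, ∃ K > 0, ∀ b a' b', b ∈ B → a' ∈ projSet A b → b' ∈ projSet B a' →
      dist b xs < ε →
      dist b b' ≤ K * infDist b A ^ (1 - ω / 2) - K * infDist b' A ^ (1 - ω / 2) ∧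
      2 * γ * infDist b' A ^ (ω + 2) ≤ dist b b' ^ 2 := by
  obtain ⟨U, hU, hsepU⟩ := hsep
  obtain ⟨U', hU', hregU⟩ := hreg
  obtain ⟨ε, ⟨hε, hε1⟩, hblock⟩ := exists_forall_block_mem hxs (inter_mem hU hU')
  obtain ⟨K, hK, hKstep⟩ := exists_le_mul_rpow_sub_rpow hω0 hω2 hc hcγ
  refine ⟨ε, hε, K, hK, fun b a' b' hb ha' hb' hbx => ?_⟩
  obtain ⟨hbU, ha'U, hb'U⟩ := hblock b a' b' ha' hb' hbx
  have hd : infDist b A = ‖b - a'‖ := ha'.2.symm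
  have hrd : ‖a' - b'‖ ≤ ‖b - a'‖ := by
    rw [norm_sub_rev b a']; exact norm_sub_le_of_mem_projSet_s14 hb' hb
  have hD' : infDist b' A ≤ ‖a' - b'‖ := by
    rw [← dist_eq_norm, dist_comm]; exact infDist_le_dist_of_mem ha'.1
  have hsepn := sq_sub_add_le_norm_sub_sq_of_inner_le
    (hsepU b a' b' hb ha' hb' hbU.1 ha'U.1 hb'U.1)
  rw [sub_sub_sub_cancel_right, norm_sub_rev b' a'] at hsepn
  have hregn (hnear : ‖b - a'‖ ≤ (1 + c) * ‖a' - b'‖) := sub_sub_sub_cancel_right b a' b' ▸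
    norm_sq_le_of_inner_le (hregU a' ⟨ha'.1, ha'U.2⟩ b' ⟨hb', hb'U.2⟩ b hb hnear ha')
  have hstep := hKstep _ _ _ (norm_nonneg _) hrd
    (by linarith [infDist_le_dist_of_mem (x := b) hxs.1]) (norm_nonneg _)
    (norm_sub_le_norm_sub_add_norm_sub b a' b') hsepn hregn
  rw [dist_eq_norm, hd]
  constructor
  · have := Real.rpow_le_rpow infDist_nonneg hD' (by linarith : 0 ≤ 1 - ω / 2)
    nlinarith
  · have := rpow_add_two_le_rpow_mul_mul hω0 infDist_nonneg hD' hrd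
    nlinarith [sq_nonneg (‖b - a'‖ - ‖a' - b'‖)]

theorem exists_pos_tendsto_of_dist_lt [CompleteSpace E] {A B : Set E} (hA : IsClosed A)
    (hB : IsClosed B) {xs : E} (hxs : xs ∈ A ∩ B) {ω γ c : ℝ} (hω0 : 0 ≤ ω) (hω2 : ω < 2)
    (hγ : 0 < γ) (hc : 0 < c) (hcγ : 2 * c < γ)
    (hsep : SeparablyIntersects A B xs ω γ) (hreg : HolderRegular A B xs (ω / 2) c) :
    ∃ η > 0, ∀ a b : ℕ → E, IsAlternatingProjections A B a b → dist (b 0) xs < η →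
      ∃ p ∈ A ∩ B, Tendsto a atTop (𝓝 p) ∧ Tendsto b atTop (𝓝 p) := by
  obtain ⟨ε, hε, K, hK, hstep⟩ := exists_local_step_estimate hxs hω0 hω2 hc hcγ hsep hreg
  obtain ⟨η, hη, hηε⟩ := exists_pos_add_mul_rpow_lt (K := K) (by linarith : 0 < 1 - ω / 2) hε
  refine ⟨η, hη, fun a b hab hb0 => ?_⟩
  have hblock (k : ℕ) := hstep (b k) (a (k + 1)) (b (k + 1)) (hab.mem_projSet_B k).1
    (hab.mem_projSet_A k) (hab.mem_projSet_B (k + 1))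
  have hφ (k : ℕ) : 0 ≤ K * infDist (b k) A ^ (1 - ω / 2) :=
    mul_nonneg hK.le (Real.rpow_nonneg infDist_nonneg _)
  have hφ0 : K * infDist (b 0) A ^ (1 - ω / 2) ≤ K * η ^ (1 - ω / 2) :=
    mul_le_mul_of_nonneg_left (Real.rpow_le_rpow infDist_nonneg
      ((infDist_le_dist_of_mem hxs.1).trans hb0.le) (by linarith)) hK.le
  have htrap := dist_lt_of_dist_le_sub hφ (fun k hk => (hblock k hk).1) (by linarith)
  obtain ⟨p, hp⟩ := cauchySeq_tendsto_of_complete <|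
    cauchySeq_of_dist_le_sub hφ fun k => (hblock k (htrap k)).1
  obtain ⟨hpAB, hap⟩ := hab.mem_inter_and_tendsto hA ⟨xs, hxs.1⟩ hB hp
    (by positivity : 0 < 2 * γ) (by linarith : 0 < ω + 2) fun k => (hblock k (htrap k)).2
  exact ⟨p, hpAB, hap, hp⟩

theorem stmt14_general {n : ℕ} (A B : Set (EuclideanSpace ℝ (Fin n)))
    (hAc : IsClosed A) (hBc : IsClosed B)
    (xs : EuclideanSpace ℝ (Fin n)) (hxs : xs ∈ A ∩ B)
    (ω γ c : ℝ) (hω : 0 ≤ ω) (hω2 : ω < 2) (hγ : 0 < γ) (hc : 0 < c) (hcγ : c < γ / 2)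
    (hsep : SeparablyIntersects A B xs ω γ)
    (hreg : HolderRegular A B xs (ω / 2) c) :
    ∃ V ∈ nhds xs, ∀ a b : ℕ → EuclideanSpace ℝ (Fin n),
      (∀ k, b k ∈ projSet B (a k)) → (∀ k, a (k + 1) ∈ projSet A (b k)) →
      (∃ k, a k ∈ V ∨ b k ∈ V) →
      ∃ p ∈ A ∩ B, Filter.Tendsto a Filter.atTop (nhds p) ∧
        Filter.Tendsto b Filter.atTop (nhds p) := by
  obtain ⟨η, hη, hconv⟩ :=
    exists_pos_tendsto_of_dist_lt hAc hBc hxs hω hω2 hγ hc (by linarith) hsep hreg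
  refine ⟨ball xs (η / 2), ball_mem_nhds xs (by positivity), fun a b hb ha ⟨m, hm⟩ => ?_⟩
  have hab : IsAlternatingProjections A B a b := ⟨hb, ha⟩
  have hbm : dist (b m) xs < η := by
    rcases hm with ham | hbm
    · linarith [dist_le_two_mul_of_mem_projSet (hb m) hxs.2, mem_ball.1 ham]
    · linarith [mem_ball.1 hbm]
  obtain ⟨p, hp, hap, hbp⟩ := hconv _ _ (hab.shift m) (by simpa using hbm)
  exact ⟨p, hp, (tendsto_add_atTop_iff_nat m).1 hap, (tendsto_add_atTop_iff_nat m).1 hbp⟩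

theorem stmt14 {n : ℕ} (A B : Set (EuclideanSpace ℝ (Fin n)))
    (hAne : A.Nonempty) (hBne : B.Nonempty) (hAc : IsClosed A) (hBc : IsClosed B)
    (xs : EuclideanSpace ℝ (Fin n)) (hxs : xs ∈ A ∩ B)
    (ω γ c : ℝ) (hω : 0 ≤ ω) (hω2 : ω < 2) (hγ : 0 < γ) (hc : 0 < c) (hcγ : c < γ / 2)
    (hsep : SeparablyIntersects A B xs ω γ)
    (hreg : HolderRegular A B xs (ω / 2) c) :
    ∃ V ∈ nhds xs, ∀ a b : ℕ → EuclideanSpace ℝ (Fin n),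
      (∀ k, b k ∈ projSet B (a k)) → (∀ k, a (k + 1) ∈ projSet A (b k)) →
      (∃ k, a k ∈ V ∨ b k ∈ V) →
      ∃ p ∈ A ∩ B, Filter.Tendsto a Filter.atTop (nhds p) ∧
        Filter.Tendsto b Filter.atTop (nhds p) :=
  stmt14_general A B hAc hBc xs hxs ω γ c hω hω2 hγ hc hcγ hsep hreg
end
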